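/- Idle region of the suboptimal policy (Theorem 2, Property 1): let V̂_{n,m} : {0,…,N_{n,m}} → ℝ be non-decreasing for every (n,m) ∈ I and set V̂(Q) = Σ_{(n,m)∈I} V̂_{n,m}(Q_{n,m}). Let 𝟎 denote the all-idle action (0,…,0) ∈ 𝒰. If Q ∈ 𝒬 satisfies Q_{n,m} ≤ φ̂_𝟎⁺(Q_{−n,−m}) for every (n,m) ∈ I, then Δ̂_{𝟎,v}(Q) ≤ 0 for every v ∈ 𝒰; in particular the idle action 𝟎 attains min_{u∈𝒰} Ĵ(Q,u), i.e., the suboptimal policy μ̂* keeps all BSs idle at Q. -/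

import Mathlib

open Finset

namespace HetNet

/-- The queue index set `I = {(n,m) : 0 ≤ n ≤ N, m ∈ M_n}`. -/
abbrev Idx {N M : ℕ} (cache : Fin (N + 1) → Finset (Fin M)) : Type :=
  {p : Fin (N + 1) × Fin M // p.2 ∈ cache p.1}

/-- The feasible action space `𝒰`: each BS schedules a cached content or idles (`none`),
and the MBS (BS `0`) and the SBSs do not operate concurrently. -/
def Feasible {N M : ℕ} (cache : Fin (N + 1) → Finset (Fin M))
    (u : Fin (N + 1) → Option (Fin M)) : Prop :=
  (∀ n m, u n = some m → m ∈ cache n) ∧ (u 0 ≠ none → ∀ n, n ≠ 0 → u n = none)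

instance {N M : ℕ} (cache : Fin (N + 1) → Finset (Fin M)) :
    DecidablePred (Feasible cache) := by
  intro u; unfold Feasible; infer_instance

instance {N M : ℕ} (cache : Fin (N + 1) → Finset (Fin M)) :
    Nonempty {u : Fin (N + 1) → Option (Fin M) // Feasible cache u} :=
  ⟨⟨fun _ => none, fun _ _ h => (by cases h), fun h => absurd rfl h⟩⟩

/-- Queue `(n,m)` is served by action `u`. -/
def Served {N M : ℕ} (u : Fin (N + 1) → Option (Fin M)) (n : Fin (N + 1)) (m : Fin M) : Prop :=
  (n = 0 ∧ u 0 = some m) ∨ (n ≠ 0 ∧ (u 0 = some m ∨ u n = some m))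

instance {N M : ℕ} (u : Fin (N + 1) → Option (Fin M)) (n : Fin (N + 1)) (m : Fin M) :
    Decidable (Served u n m) := by unfold Served; infer_instance

/-- The queue transition map `T(Q,u,A)`. -/
def T {N M : ℕ} {cache : Fin (N + 1) → Finset (Fin M)} (bound : Idx cache → ℕ)
    (Q : Idx cache → ℕ) (u : Fin (N + 1) → Option (Fin M)) (A : Idx cache → ℕ) :
    Idx cache → ℕ := fun i =>
  if Served u i.val.1 i.val.2 then min (A i) (bound i) else min (Q i + A i) (bound i)

/-- The network power cost `p(u) = Σ_n p(n, u_n)` (with `p(n,0) = 0` for an idling BS). -/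
def pcost {N M : ℕ} (p : Fin (N + 1) → Fin M → ℝ) (u : Fin (N + 1) → Option (Fin M)) : ℝ :=
  ∑ n, (u n).elim 0 (p n)

/-- The sum request queue length `d(Q)`. -/
def dcost {N M : ℕ} {cache : Fin (N + 1) → Finset (Fin M)} (Q : Idx cache → ℕ) : ℝ :=
  ∑ i, (Q i : ℝ)

/-- The per-stage cost `g(Q,u) = d(Q) + w·p(u)`. -/
def gcost {N M : ℕ} (p : Fin (N + 1) → Fin M → ℝ) (w : ℝ)
    {cache : Fin (N + 1) → Finset (Fin M)}
    (Q : Idx cache → ℕ) (u : Fin (N + 1) → Option (Fin M)) : ℝ :=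
  dcost Q + w * pcost p u

/-- The state-action cost `J_V(Q,u) = g(Q,u) + Σ_{A∈𝒜} P(A)·V(T(Q,u,A))`. -/
def Jcost {N M : ℕ} (p : Fin (N + 1) → Fin M → ℝ) (w : ℝ)
    {cache : Fin (N + 1) → Finset (Fin M)} (bound : Idx cache → ℕ)
    {ι : Type} [Fintype ι] (P : ι → ℝ) (A : ι → Idx cache → ℕ)
    (V : (Idx cache → ℕ) → ℝ) (Q : Idx cache → ℕ)
    (u : Fin (N + 1) → Option (Fin M)) : ℝ :=
  gcost p w Q u + ∑ a, P a * V (T bound Q u (A a))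

open scoped Classical in
/-- `Φ_u(Q_{−n,−m})`: the set of queue lengths `q ∈ {0,…,N_{n,m}}` at coordinate `i = (n,m)`
such that action `u` dominates every other feasible action at the state obtained from `Q`
by replacing its `(n,m)`-coordinate with `q`.  Its `Finset.max` (valued in `WithBot ℕ`,
`⊥` = −∞) is `φ_u⁺(Q_{−n,−m})`, and its `Finset.min` (valued in `WithTop ℕ`, `⊤` = +∞)
is `φ_u⁻(Q_{−n,−m})`. -/
noncomputable def Phi {N M : ℕ} (p : Fin (N + 1) → Fin M → ℝ) (w : ℝ)
    {cache : Fin (N + 1) → Finset (Fin M)} (bound : Idx cache → ℕ)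
    {ι : Type} [Fintype ι] (P : ι → ℝ) (A : ι → Idx cache → ℕ)
    (V : (Idx cache → ℕ) → ℝ) (u : Fin (N + 1) → Option (Fin M))
    (i : Idx cache) (Q : Idx cache → ℕ) : Finset ℕ :=
  (Finset.range (bound i + 1)).filter fun q =>
    ∀ v, Feasible cache v → v ≠ u →
      Jcost p w bound P A V (Function.update Q i q) u -
        Jcost p w bound P A V (Function.update Q i q) v ≤ 0

lemma _root_.Finset.exists_mem_le_of_coe_le_max {α : Type*} [LinearOrder α] {s : Finset α}
    {a : α} (h : (a : WithBot α) ≤ s.max) : ∃ b ∈ s, a ≤ b := by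
  rw [Finset.max_eq_sup_coe, Finset.le_sup_iff (WithBot.bot_lt_coe a)] at h
  simpa only [WithBot.coe_le_coe] using h

section

variable {N M : ℕ} {cache : Fin (N + 1) → Finset (Fin M)}

lemma feasible_idle : Feasible cache (fun _ => none) :=
  ⟨fun _ _ h => (by cases h), fun h => absurd rfl h⟩

lemma not_served_idle (n : Fin (N + 1)) (m : Fin M) : ¬ Served (fun _ => none) n m := by
  simp [Served]

lemma T_idle (bound : Idx cache → ℕ) (Q : Idx cache → ℕ) (A : Idx cache → ℕ) (i : Idx cache) :
    T bound Q (fun _ => none) A i = min (Q i + A i) (bound i) :=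
  if_neg (not_served_idle _ _)

lemma T_update_of_ne [DecidableEq (Idx cache)] (bound : Idx cache → ℕ) (Q : Idx cache → ℕ)
    (u : Fin (N + 1) → Option (Fin M)) (A : Idx cache → ℕ) {i j : Idx cache} (hji : j ≠ i)
    (q : ℕ) : T bound (Function.update Q i q) u A j = T bound Q u A j := by
  simp only [T, Function.update_of_ne hji]

lemma pcost_idle (p : Fin (N + 1) → Fin M → ℝ) : pcost p (fun _ => none) = 0 := by
  simp [pcost]

lemma pcost_nonneg {p : Fin (N + 1) → Fin M → ℝ} (hp : ∀ n m, 0 ≤ p n m)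
    (u : Fin (N + 1) → Option (Fin M)) : 0 ≤ pcost p u :=
  Finset.sum_nonneg fun n _ => by cases u n <;> simp [hp]

lemma Jcost_sub_Jcost (p : Fin (N + 1) → Fin M → ℝ) (w : ℝ) (bound : Idx cache → ℕ)
    {ι : Type} [Fintype ι] (P : ι → ℝ) (A : ι → Idx cache → ℕ) (V : (Idx cache → ℕ) → ℝ)
    (Q : Idx cache → ℕ) (u v : Fin (N + 1) → Option (Fin M)) :
    Jcost p w bound P A V Q u - Jcost p w bound P A V Q v =
      w * (pcost p u - pcost p v) +
        ∑ a, P a * (V (T bound Q u (A a)) - V (T bound Q v (A a))) := by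
  simp only [Jcost, gcost, mul_sub, Finset.sum_sub_distrib]
  ring

/-- Without queues all states coincide, so only the power cost tells actions apart. -/
lemma Jcost_idle_le_of_isEmpty [IsEmpty (Idx cache)] {p : Fin (N + 1) → Fin M → ℝ}
    (hp : ∀ n m, 0 ≤ p n m) {w : ℝ} (hw : 0 ≤ w) (bound : Idx cache → ℕ)
    {ι : Type} [Fintype ι] (P : ι → ℝ) (A : ι → Idx cache → ℕ) (V : (Idx cache → ℕ) → ℝ)
    (Q : Idx cache → ℕ) (v : Fin (N + 1) → Option (Fin M)) :
    Jcost p w bound P A V Q (fun _ => none) ≤ Jcost p w bound P A V Q v := by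
  have hT : ∀ a, T bound Q (fun _ => none) (A a) = T bound Q v (A a) :=
    fun _ => Subsingleton.elim _ _
  rw [← sub_nonpos, Jcost_sub_Jcost, pcost_idle]
  simp only [hT, sub_self, mul_zero, Finset.sum_const_zero, add_zero, zero_sub, mul_neg,
    neg_nonpos]
  exact mul_nonneg hw (pcost_nonneg hp v)

/-- For a separable value function, raising queue `i` raises the next-state value under idling
at least as much as under any `v`: under `v` queue `i` is either flushed or evolves as under
idling, and the other queues do not see the change. -/
lemma sum_value_T_idle_sub_T_mono [DecidableEq (Idx cache)] (bound : Idx cache → ℕ)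
    (Vv : (i : Idx cache) → ℕ → ℝ)
    (hVv : ∀ i : Idx cache, ∀ q q' : ℕ, q ≤ q' → q' ≤ bound i → Vv i q ≤ Vv i q')
    (v : Fin (N + 1) → Option (Fin M)) (A : Idx cache → ℕ) (Q : Idx cache → ℕ)
    (i : Idx cache) {q q' : ℕ} (hq : q ≤ q') :
    ∑ j, Vv j (T bound (Function.update Q i q) (fun _ => none) A j) -
        ∑ j, Vv j (T bound (Function.update Q i q) v A j) ≤
      ∑ j, Vv j (T bound (Function.update Q i q') (fun _ => none) A j) -
        ∑ j, Vv j (T bound (Function.update Q i q') v A j) := by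
  rw [← Finset.sum_sub_distrib, ← Finset.sum_sub_distrib]
  refine Finset.sum_le_sum fun j _ => ?_
  obtain rfl | hji := eq_or_ne j i
  · simp only [T_idle, Function.update_self]
    by_cases hs : Served v j.val.1 j.val.2
    · simp only [T, if_pos hs]
      exact sub_le_sub_right (hVv j _ _ (by omega) (min_le_right _ _)) _
    · simp only [T, if_neg hs, Function.update_self, sub_self, le_refl]
  · simp only [T_update_of_ne bound Q _ A hji, le_refl]

lemma Jcost_idle_sub_monotone [DecidableEq (Idx cache)] (p : Fin (N + 1) → Fin M → ℝ) (w : ℝ)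
    (bound : Idx cache → ℕ) {ι : Type} [Fintype ι] {P : ι → ℝ} (hP : ∀ a, 0 ≤ P a)
    (A : ι → Idx cache → ℕ) (Vv : (i : Idx cache) → ℕ → ℝ)
    (hVv : ∀ i : Idx cache, ∀ q q' : ℕ, q ≤ q' → q' ≤ bound i → Vv i q ≤ Vv i q')
    (v : Fin (N + 1) → Option (Fin M)) (Q : Idx cache → ℕ) (i : Idx cache) :
    Monotone fun q =>
      Jcost p w bound P A (fun Q' => ∑ j, Vv j (Q' j)) (Function.update Q i q) (fun _ => none) -
        Jcost p w bound P A (fun Q' => ∑ j, Vv j (Q' j)) (Function.update Q i q) v := by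
  intro q q' hq
  simp only [Jcost_sub_Jcost]
  refine add_le_add le_rfl (Finset.sum_le_sum fun a _ => ?_)
  exact mul_le_mul_of_nonneg_left (sum_value_T_idle_sub_T_mono bound Vv hVv v (A a) Q i hq) (hP a)

/-- `φ̂⁺` supplies some `b ≥ Q i` at which idling dominates, and monotonicity in queue `i`
carries this down to `Q i`. -/
lemma Jcost_idle_sub_nonpos_of_le_max_Phi (p : Fin (N + 1) → Fin M → ℝ) (w : ℝ)
    (bound : Idx cache → ℕ) {ι : Type} [Fintype ι] {P : ι → ℝ} (hP : ∀ a, 0 ≤ P a)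
    (A : ι → Idx cache → ℕ) (Vv : (i : Idx cache) → ℕ → ℝ)
    (hVv : ∀ i : Idx cache, ∀ q q' : ℕ, q ≤ q' → q' ≤ bound i → Vv i q ≤ Vv i q')
    (Q : Idx cache → ℕ) (i : Idx cache)
    (hidle : (Q i : WithBot ℕ) ≤
      (Phi p w bound P A (fun Q' => ∑ j, Vv j (Q' j)) (fun _ => none) i Q).max)
    {v : Fin (N + 1) → Option (Fin M)} (hv : Feasible cache v) :
    Jcost p w bound P A (fun Q' => ∑ j, Vv j (Q' j)) Q (fun _ => none) -
      Jcost p w bound P A (fun Q' => ∑ j, Vv j (Q' j)) Q v ≤ 0 := by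
  classical
  obtain rfl | hv0 := eq_or_ne v fun _ => none
  · simp
  rw [Nat.cast_withBot] at hidle
  obtain ⟨b, hb, hQb⟩ := Finset.exists_mem_le_of_coe_le_max hidle
  rw [Phi, Finset.mem_filter] at hb
  have hmono := Jcost_idle_sub_monotone p w bound hP A Vv hVv v Q i hQb
  simp only [Function.update_eq_self] at hmono
  exact hmono.trans (hb.2 v hv hv0)

end

theorem suboptimal_idle_region_general {N M : ℕ} (cache : Fin (N + 1) → Finset (Fin M))
    (bound : Idx cache → ℕ)
    (p : Fin (N + 1) → Fin M → ℝ) (hp : ∀ n m, 0 ≤ p n m)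
    (w : ℝ) (hw : 0 ≤ w)
    {ι : Type} [Fintype ι] (P : ι → ℝ) (A : ι → Idx cache → ℕ)
    (hP : ∀ a, 0 ≤ P a)
    (Vv : (i : Idx cache) → ℕ → ℝ)
    (hVv : ∀ i : Idx cache, ∀ q q' : ℕ, q ≤ q' → q' ≤ bound i → Vv i q ≤ Vv i q')
    (Q : Idx cache → ℕ)
    (hidle : ∀ i : Idx cache,
      (Q i : WithBot ℕ) ≤
        (Phi p w bound P A (fun Q' => ∑ j, Vv j (Q' j)) (fun _ => none) i Q).max) :
    (∀ v, Feasible cache v →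
        Jcost p w bound P A (fun Q' => ∑ j, Vv j (Q' j)) Q (fun _ => none) -
          Jcost p w bound P A (fun Q' => ∑ j, Vv j (Q' j)) Q v ≤ 0) ∧
      Jcost p w bound P A (fun Q' => ∑ j, Vv j (Q' j)) Q (fun _ => none) =
        ⨅ u : {u // Feasible cache u},
          Jcost p w bound P A (fun Q' => ∑ j, Vv j (Q' j)) Q u.val := by
  have idle_dominates : ∀ v, Feasible cache v →
      Jcost p w bound P A (fun Q' => ∑ j, Vv j (Q' j)) Q (fun _ => none) -
        Jcost p w bound P A (fun Q' => ∑ j, Vv j (Q' j)) Q v ≤ 0 := by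
    intro v hv
    rcases isEmpty_or_nonempty (Idx cache) with hE | ⟨⟨i⟩⟩
    · exact sub_nonpos.mpr (Jcost_idle_le_of_isEmpty hp hw bound P A _ Q v)
    · exact Jcost_idle_sub_nonpos_of_le_max_Phi p w bound hP A Vv hVv Q i (hidle i) hv
  refine ⟨idle_dominates, le_antisymm ?_ ?_⟩
  · exact le_ciInf fun u => sub_nonpos.mp (idle_dominates u.val u.property)
  · exact ciInf_le (Finite.bddBelow_range _) (⟨_, feasible_idle⟩ : {u // Feasible cache u})

/-- Theorem 2, Property 1: idle region of the suboptimal policy: with the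
additive separable approximation `V̂(Q) = Σ V̂_{n,m}(Q_{n,m})` built from non-decreasing
per-queue value functions, if `Q ∈ 𝒬` satisfies `Q_{n,m} ≤ φ̂_𝟎⁺(Q_{−n,−m})` for every
`(n,m) ∈ I`, then `Δ̂_{𝟎,v}(Q) ≤ 0` for every `v ∈ 𝒰`; in particular the idle action
attains `min_{u∈𝒰} Ĵ(Q,u)`. -/
theorem suboptimal_idle_region {N M : ℕ} (cache : Fin (N + 1) → Finset (Fin M))
    (hcache0 : ∀ m : Fin M, m ∈ cache 0)
    (bound : Idx cache → ℕ)
    (p : Fin (N + 1) → Fin M → ℝ) (hp : ∀ n m, 0 ≤ p n m)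
    (w : ℝ) (hw : 0 ≤ w)
    {ι : Type} [Fintype ι] (P : ι → ℝ) (A : ι → Idx cache → ℕ)
    (hP : ∀ a, 0 ≤ P a) (hPsum : ∑ a, P a = 1)
    (Vv : (i : Idx cache) → ℕ → ℝ)
    (hVv : ∀ i : Idx cache, ∀ q q' : ℕ, q ≤ q' → q' ≤ bound i → Vv i q ≤ Vv i q')
    (Q : Idx cache → ℕ) (hQ : ∀ i, Q i ≤ bound i)
    (hidle : ∀ i : Idx cache,
      (Q i : WithBot ℕ) ≤
        (Phi p w bound P A (fun Q' => ∑ j, Vv j (Q' j)) (fun _ => none) i Q).max) :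
    (∀ v, Feasible cache v →
        Jcost p w bound P A (fun Q' => ∑ j, Vv j (Q' j)) Q (fun _ => none) -
          Jcost p w bound P A (fun Q' => ∑ j, Vv j (Q' j)) Q v ≤ 0) ∧
      Jcost p w bound P A (fun Q' => ∑ j, Vv j (Q' j)) Q (fun _ => none) =
        ⨅ u : {u // Feasible cache u},
          Jcost p w bound P A (fun Q' => ∑ j, Vv j (Q' j)) Q u.val :=
  suboptimal_idle_region_general cache bound p hp w hw P A hP Vv hVv Q hidle

end HetNet
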